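/- For Rule 138 (local rule g with g(top,center,right) outputting 1 exactly for the neighbourhoods (0,0,1), (0,1,1), (1,0,0) — i.e., the rule whose Wolfram number under W(g) = Σ g(a₀,a₁,a₂)·2^(4a₀+2a₁+a₂) is 138), and any n ≥ 1, the response curve is Pₙ(1) = (ρ^(2n+2) + ρ)/(ρ + 1) for ρ ∈ [0,1], given that its n-step preimages of the single cell 1 consist of the n+2 families described by: bottom two rows equal to (arbitrary, then a run of i ones ending the bottom row and 0 followed by i−1 ones ending the second row) for i = 1,…,n+1, plus the block with both bottom rows all ones, with the top n−1 rows arbitrary. -/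

import Mathlib

/-- The set of lattice positions of a triangular block of size `r`:
pairs `(i,j)` with `i,j ≥ 1` and `i + j ≤ r + 1`. -/
def Tri (r : ℕ) : Finset (ℕ × ℕ) :=
  (Finset.range (r + 2) ×ˢ Finset.range (r + 2)).filter
    (fun p => 1 ≤ p.1 ∧ 1 ≤ p.2 ∧ p.1 + p.2 ≤ r + 1)

/-- A triangular block of size `r`: an assignment of values in `{0,1}` to the
positions of `Tri r`. -/
def TriBlock (r : ℕ) := {p // p ∈ Tri r} → Fin 2

instance (r : ℕ) : Fintype (TriBlock r) := by unfold TriBlock; infer_instance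
instance (r : ℕ) : DecidableEq (TriBlock r) := by unfold TriBlock; infer_instance

/-- Extend a triangular block to a total function on `ℕ × ℕ` (zero outside). -/
def ext {r : ℕ} (b : TriBlock r) : ℕ → ℕ → Fin 2 :=
  fun i j => if h : (i, j) ∈ Tri r then b ⟨(i, j), h⟩ else 0

/-- The value of block `b` at position `(i,j)` (zero outside the block). -/
def cell {r : ℕ} (b : TriBlock r) (i j : ℕ) : Fin 2 := ext b i j

/-- One application of the local rule `g` (arguments: top, center, right)
at every site: `c(i,j) = g(b(i,j+1), b(i,j), b(i+1,j))`. -/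
def step (g : Fin 2 → Fin 2 → Fin 2 → Fin 2) (s : ℕ → ℕ → Fin 2) : ℕ → ℕ → Fin 2 :=
  fun i j => g (s i (j + 1)) (s i j) (s (i + 1) j)

/-- Restrict a total function to a triangular block of size `r`. -/
def contract (r : ℕ) (s : ℕ → ℕ → Fin 2) : TriBlock r := fun q => s q.1.1 q.1.2

/-- The block evolution operator: maps a block of size `m` (intended `m = r+1`)
to a block of size `r` via `c(i,j) = g(b(i,j+1), b(i,j), b(i+1,j))`. -/
def evolve (g : Fin 2 → Fin 2 → Fin 2 → Fin 2) {m : ℕ} (r : ℕ) (b : TriBlock m) :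
    TriBlock r := contract r (step g (ext b))

/-- The `n`-fold iterate of the block evolution operator, from blocks of size `m`
(intended `m = r + n`) to blocks of size `r`. -/
def evolveN (g : Fin 2 → Fin 2 → Fin 2 → Fin 2) (n : ℕ) {m : ℕ} (r : ℕ)
    (b : TriBlock m) : TriBlock r := contract r ((step g)^[n] (ext b))

/-- The single-cell block consisting of a `1`. -/
def oneBlock : TriBlock 1 := fun _ => 1

/-- Number of cells in state 1 in a block. -/
def numOnes {r : ℕ} (b : TriBlock r) : ℕ :=
  (@Finset.filter _ (fun x => b x = 1) (fun x => instDecidableEqFin 2 (b x) 1) Finset.univ).card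

/-- Number of cells in state 0 in a block. -/
def numZeros {r : ℕ} (b : TriBlock r) : ℕ :=
  (@Finset.filter _ (fun x => b x = 0) (fun x => instDecidableEqFin 2 (b x) 0) Finset.univ).card

/-- The set of `n`-step preimages of the single-cell block `1`:
blocks of size `n + 1` mapped by `n` iterations of the block evolution
operator of `g` to the single cell `1`. -/
def preimages (g : Fin 2 → Fin 2 → Fin 2 → Fin 2) (n : ℕ) :
    Finset (TriBlock (n + 1)) :=
  Finset.univ.filter (fun b => evolveN g n 1 b = oneBlock)

/-- `Pₙ(1)`: the density of ones after `n` iterations, starting from a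
Bernoulli-`ρ` initial measure, computed by summing the probabilities of all
`n`-step preimages of the single cell `1`. -/
noncomputable def Pn (g : Fin 2 → Fin 2 → Fin 2 → Fin 2) (n : ℕ) (ρ : ℝ) : ℝ :=
  ∑ a ∈ preimages g n, ρ ^ numOnes a * (1 - ρ) ^ numZeros a


/-- Rule 138 (Wolfram number 138 = 2¹ + 2³ + 2⁷ under
`W(g) = Σ g(a₀,a₁,a₂)·2^(4a₀+2a₁+a₂)`): with arguments (top, center, right),
output 1 exactly on (0,0,1), (0,1,1) and (1,1,1). -/
def g138 : Fin 2 → Fin 2 → Fin 2 → Fin 2 := fun x y z =>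
  if (x = 0 ∧ y = 0 ∧ z = 1) ∨ (x = 0 ∧ y = 1 ∧ z = 1) ∨ (x = 1 ∧ y = 1 ∧ z = 1)
    then 1 else 0

/-! Rule 138 writes a `1` exactly when the right neighbour is `1`, unless the centre is `0` under
a top `1`. Running this backwards, cell `(1,1)` is `1` after `n` steps iff the two bottom rows of
the initial block end, for some `j ≤ n`, in ones strictly after column `j`, with a `0` at `(j,2)`
when `j ≠ 0`; one step of the rule maps these patterns for `n + 1` onto those for `n`. The `n + 1`
patterns are mutually exclusive and each one pins down only its own cells, so under the Bernoulli
measure pattern `j` has weight `(1 - ρ) ρ^(2(n-j)+1)` (and `ρ^(2n+1)` for `j = 0`); summing the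
resulting geometric series gives the formula. -/

open Finset

theorem sum_prod_eq_prod_of_forall_mem_eq {ι κ R : Type*} [Fintype ι] [DecidableEq ι] [Fintype κ]
    [DecidableEq κ] [CommSemiring R] (S : Finset ι) (c : ι → κ) (w : κ → R) (hw : ∑ v, w v = 1) :
    ∑ b ∈ univ.filter (fun b : ι → κ => ∀ x ∈ S, b x = c x), ∏ x, w (b x) = ∏ x ∈ S, w (c x) := by
  set f : ι → κ → R := fun x v => if x ∈ S then (if v = c x then w v else 0) else w v
  have hterm (b : ι → κ) :
      (if ∀ x ∈ S, b x = c x then ∏ x, w (b x) else 0) = ∏ x, f x (b x) := by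
    split_ifs with hb
    · exact prod_congr rfl fun x _ => by by_cases hx : x ∈ S <;> simp [f, hx, hb]
    · push Not at hb
      obtain ⟨x, hx, hbx⟩ := hb
      exact (prod_eq_zero (mem_univ x) (by simp [f, hx, hbx])).symm
  have hfactor (x : ι) : ∑ v, f x v = if x ∈ S then w (c x) else 1 := by
    by_cases hx : x ∈ S <;> simp [f, hx, hw]
  rw [sum_filter, sum_congr rfl fun b _ => hterm b, ← Fintype.prod_sum]
  simp only [hfactor, prod_ite_mem, univ_inter]

theorem prod_comp_fin_two {ι R : Type*} [Fintype ι] [CommMonoid R] (w : Fin 2 → R) (b : ι → Fin 2) :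
    ∏ x, w (b x) = w 0 ^ #{x | b x = 0} * w 1 ^ #{x | b x = 1} := by
  rw [← prod_fiberwise univ b, Fin.prod_univ_two]
  congr 1 <;> exact prod_eq_pow_card fun x hx => by rw [(mem_filter.1 hx).2]

theorem weight_eq_prod {r : ℕ} (ρ : ℝ) (b : TriBlock r) :
    ρ ^ numOnes b * (1 - ρ) ^ numZeros b = ∏ x, ![1 - ρ, ρ] (b x) := by
  rw [mul_comm]
  exact (prod_comp_fin_two (ι := {p // p ∈ Tri r}) ![1 - ρ, ρ] b).symm

theorem mem_Tri {r : ℕ} {p : ℕ × ℕ} : p ∈ Tri r ↔ 1 ≤ p.1 ∧ 1 ≤ p.2 ∧ p.1 + p.2 ≤ r + 1 := by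
  simp only [Tri, mem_filter, mem_product, mem_range, and_iff_right_iff_imp]
  omega

theorem evolveN_eq_oneBlock_iff (g : Fin 2 → Fin 2 → Fin 2 → Fin 2) (n : ℕ) {m : ℕ}
    (b : TriBlock m) : evolveN g n 1 b = oneBlock ↔ (step g)^[n] (ext b) 1 1 = 1 := by
  have hcell (x : {p // p ∈ Tri 1}) : x.1 = (1, 1) := by
    have := mem_Tri.1 x.2
    ext <;> omega
  refine ⟨fun h => congrFun h ⟨(1, 1), by decide⟩, fun h => funext fun x => ?_⟩
  simp only [evolveN, contract, hcell x, h, oneBlock]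

theorem step_g138_eq_one_iff (s : ℕ → ℕ → Fin 2) (i j : ℕ) :
    step g138 s i j = 1 ↔ s (i + 1) j = 1 ∧ (s i j = 1 ∨ s i (j + 1) = 0) := by
  simp only [step]
  generalize s (i + 1) j = r, s i j = c, s i (j + 1) = t
  revert r c t
  decide

theorem step_g138_eq_zero_iff (s : ℕ → ℕ → Fin 2) (i j : ℕ) :
    step g138 s i j = 0 ↔ s (i + 1) j = 0 ∨ (s i j = 0 ∧ s i (j + 1) = 1) := by
  simp only [step]
  generalize s (i + 1) j = r, s i j = c, s i (j + 1) = t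
  revert r c t
  decide

def RowOnes (s : ℕ → ℕ → Fin 2) (r j m : ℕ) : Prop :=
  ∀ k, j < k → k ≤ m → s k r = 1

namespace RowOnes

variable {s : ℕ → ℕ → Fin 2} {r j m : ℕ}

theorem step_g138 (h : RowOnes s r j (m + 1)) : RowOnes (step g138 s) r j m :=
  fun k hjk hkm =>
    (step_g138_eq_one_iff s k r).2 ⟨h (k + 1) (by omega) (by omega), .inl (h k hjk (by omega))⟩

theorem of_step_g138 (h : RowOnes (step g138 s) r j m) : RowOnes s r (j + 1) (m + 1) :=
  fun k hjk hkm => by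
    obtain ⟨k, rfl⟩ : ∃ k', k = k' + 1 := ⟨k - 1, by omega⟩
    exact ((step_g138_eq_one_iff s k r).1 (h k (by omega) (by omega))).1

theorem cons (hj : j < m → s (j + 1) r = 1) (h : RowOnes s r (j + 1) m) : RowOnes s r j m :=
  fun k hjk hkm => (Nat.eq_or_lt_of_le hjk).elim (fun hk => hk ▸ hj (by omega)) (h k · hkm)

end RowOnes

/-- The preimage family whose bottom row ends in a run of `n + 1 - j` ones; for `j = 0` both
bottom rows are all ones. -/
def BottomPattern (n j : ℕ) (s : ℕ → ℕ → Fin 2) : Prop :=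
  (j = 0 ∨ s j 2 = 0) ∧ RowOnes s 2 j n ∧ RowOnes s 1 j (n + 1)

theorem BottomPattern.exists_step {n j : ℕ} {s : ℕ → ℕ → Fin 2} (hjn : j ≤ n + 1)
    (h : BottomPattern (n + 1) j s) : ∃ j' ≤ n, BottomPattern n j' (step g138 s) := by
  obtain ⟨hzero, hrow2, hrow1⟩ := h
  rcases j with _ | j
  · exact ⟨0, n.zero_le, .inl rfl, hrow2.step_g138, hrow1.step_g138⟩
  have hj : s (j + 1) 2 = 0 := hzero.resolve_left (Nat.succ_ne_zero j)
  by_cases hkeep : j + 1 ≤ n ∧ s (j + 1) 3 ≠ 0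
  · refine ⟨j + 1, hkeep.1, .inr ?_, hrow2.step_g138, hrow1.step_g138⟩
    exact (step_g138_eq_zero_iff s _ 2).2 (.inr ⟨hj, Fin.eq_one_of_ne_zero _ hkeep.2⟩)
  refine ⟨j, by omega, .inr ((step_g138_eq_zero_iff s j 2).2 (.inl hj)), ?_, ?_⟩
  · refine hrow2.step_g138.cons fun hjn' => (step_g138_eq_one_iff s _ 2).2 ⟨hrow2 _ (by omega)
      (by omega), .inr (not_not.1 fun h3 => hkeep ⟨hjn', h3⟩)⟩
  · exact hrow1.step_g138.cons fun _ => (step_g138_eq_one_iff s _ 1).2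
      ⟨hrow1 _ (by omega) (by omega), .inr hj⟩

theorem BottomPattern.exists_of_step {n j : ℕ} {s : ℕ → ℕ → Fin 2} (hjn : j ≤ n)
    (h : BottomPattern n j (step g138 s)) : ∃ j' ≤ n + 1, BottomPattern (n + 1) j' s := by
  obtain ⟨hzero, hrow2, hrow1⟩ := h
  by_cases hnext : s (j + 1) 2 = 0
  · exact ⟨j + 1, by omega, .inr hnext, hrow2.of_step_g138, hrow1.of_step_g138⟩
  replace hnext := Fin.eq_one_of_ne_zero _ hnext
  have hcorner : s (j + 1) 1 = 1 :=
    ((step_g138_eq_one_iff s _ 1).1 (hrow1 (j + 1) (by omega) (by omega))).2.resolve_right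
      (by rw [hnext]; decide)
  refine ⟨j, by omega, ?_, hrow2.of_step_g138.cons fun _ => hnext,
    hrow1.of_step_g138.cons fun _ => hcorner⟩
  refine hzero.imp_right fun hzero => ?_
  exact (((step_g138_eq_zero_iff s j 2).1 hzero).resolve_left (by rw [hnext]; decide)).1

theorem iterate_step_g138_eq_one_iff (n : ℕ) (s : ℕ → ℕ → Fin 2) :
    (step g138)^[n] s 1 1 = 1 ↔ ∃ j ≤ n, BottomPattern n j s := by
  induction n generalizing s with
  | zero =>
    simp only [Function.iterate_zero, id_eq, nonpos_iff_eq_zero, exists_eq_left, BottomPattern,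
      RowOnes, true_or, true_and]
    exact ⟨fun h => ⟨fun k _ hk => absurd hk (by omega), fun k _ hk => by rwa [show k = 1 by omega]⟩,
      fun h => h.2 1 one_pos le_rfl⟩
  | succ n ih =>
    rw [Function.iterate_succ_apply, ih]
    exact ⟨fun ⟨j, hjn, h⟩ => h.exists_of_step hjn, fun ⟨j, hjn, h⟩ => h.exists_step hjn⟩

theorem BottomPattern.unique {n j j' : ℕ} {s : ℕ → ℕ → Fin 2} (hjn : j ≤ n) (hj'n : j' ≤ n)
    (h : BottomPattern n j s) (h' : BottomPattern n j' s) : j = j' := by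
  have hle {a b : ℕ} (hbn : b ≤ n) (ha : BottomPattern n a s) (hb : BottomPattern n b s) :
      b ≤ a := not_lt.1 fun hlt =>
    absurd ((hb.1.resolve_left (by omega)).symm.trans (ha.2.1 b hlt hbn)) (by decide)
  exact le_antisymm (hle hjn h' h) (hle hj'n h h')

def onesCells (n j : ℕ) : Finset (ℕ × ℕ) := Ioc j (n + 1) ×ˢ {1} ∪ Ioc j n ×ˢ {2}

def patternCells (n j : ℕ) : Finset (ℕ × ℕ) :=
  if j = 0 then onesCells n j else insert (j, 2) (onesCells n j)

def pattern (j : ℕ) (p : ℕ × ℕ) : Fin 2 := if p = (j, 2) then 0 else 1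

theorem mem_onesCells {n j : ℕ} {p : ℕ × ℕ} :
    p ∈ onesCells n j ↔ j < p.1 ∧ (p.2 = 1 ∧ p.1 ≤ n + 1 ∨ p.2 = 2 ∧ p.1 ≤ n) := by
  obtain ⟨i, r⟩ := p
  simp only [onesCells, mem_union, mem_product, mem_Ioc, mem_singleton]
  tauto

theorem pattern_of_mem_onesCells {n j : ℕ} {p : ℕ × ℕ} (hp : p ∈ onesCells n j) :
    pattern j p = 1 :=
  if_neg fun h => by rw [mem_onesCells, h] at hp; exact lt_irrefl j hp.1

theorem rowOnes_iff_forall_onesCells {n j : ℕ} {s : ℕ → ℕ → Fin 2} :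
    RowOnes s 2 j n ∧ RowOnes s 1 j (n + 1) ↔ ∀ p ∈ onesCells n j, s p.1 p.2 = 1 := by
  refine ⟨fun ⟨h2, h1⟩ ⟨i, r⟩ hp => ?_, fun h => ⟨fun k hjk hkn => ?_, fun k hjk hkn => ?_⟩⟩
  · obtain ⟨hji, ⟨rfl, hi⟩ | ⟨rfl, hi⟩⟩ := mem_onesCells.1 hp
    · exact h1 i hji hi
    · exact h2 i hji hi
  · exact h (k, 2) (mem_onesCells.2 ⟨hjk, .inr ⟨rfl, hkn⟩⟩)
  · exact h (k, 1) (mem_onesCells.2 ⟨hjk, .inl ⟨rfl, hkn⟩⟩)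

theorem bottomPattern_iff_forall_patternCells {n j : ℕ} {s : ℕ → ℕ → Fin 2} :
    BottomPattern n j s ↔ ∀ p ∈ patternCells n j, s p.1 p.2 = pattern j p := by
  have hones : (∀ p ∈ onesCells n j, s p.1 p.2 = pattern j p) ↔
      ∀ p ∈ onesCells n j, s p.1 p.2 = 1 :=
    forall₂_congr fun p hp => by rw [pattern_of_mem_onesCells hp]
  rcases j with _ | j
  · simp only [BottomPattern, patternCells, if_pos, hones, rowOnes_iff_forall_onesCells, true_or,
      true_and]
  · rw [patternCells, if_neg j.succ_ne_zero, forall_mem_insert, hones,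
      ← rowOnes_iff_forall_onesCells, pattern, if_pos rfl]
    simp only [BottomPattern, j.succ_ne_zero, false_or]

theorem patternCells_subset_Tri {n j : ℕ} (hjn : j ≤ n) : patternCells n j ⊆ Tri (n + 1) := by
  have hones : onesCells n j ⊆ Tri (n + 1) := fun p hp => by
    obtain ⟨hjp, ⟨hr, hp1⟩ | ⟨hr, hp1⟩⟩ := mem_onesCells.1 hp <;> exact mem_Tri.2 (by omega)
  unfold patternCells
  split_ifs with hj
  · exact hones
  · exact insert_subset (mem_Tri.2 (by simp only; omega)) hones

theorem card_onesCells {n j : ℕ} (hjn : j ≤ n) : #(onesCells n j) = 2 * (n - j) + 1 := by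
  rw [onesCells, card_union_of_disjoint, card_product, card_product, Nat.card_Ioc, Nat.card_Ioc,
    card_singleton, card_singleton]
  · omega
  · exact disjoint_product.2 (.inr (by simp))

theorem prod_patternCells {M : Type*} [CommMonoid M] (w : Fin 2 → M) {n j : ℕ} (hjn : j ≤ n) :
    ∏ p ∈ patternCells n j, w (pattern j p) =
      (if j = 0 then 1 else w 0) * w 1 ^ (2 * (n - j) + 1) := by
  have hones : ∏ p ∈ onesCells n j, w (pattern j p) = w 1 ^ (2 * (n - j) + 1) := by
    rw [← card_onesCells hjn]
    exact prod_eq_pow_card fun p hp => by rw [pattern_of_mem_onesCells hp]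
  unfold patternCells
  split_ifs with hj
  · rw [hones, one_mul]
  · rw [prod_insert fun h => by simpa [pattern] using pattern_of_mem_onesCells h, hones, pattern,
      if_pos rfl]

theorem ext_of_mem {r : ℕ} (b : TriBlock r) {i j : ℕ} (h : (i, j) ∈ Tri r) :
    ext b i j = b ⟨(i, j), h⟩ :=
  dif_pos h

theorem forall_mem_ext_iff {r : ℕ} (b : TriBlock r) {P : Finset (ℕ × ℕ)} (hP : P ⊆ Tri r)
    (c : ℕ × ℕ → Fin 2) :
    (∀ p ∈ P, ext b p.1 p.2 = c p) ↔ ∀ x ∈ P.subtype (· ∈ Tri r), b x = c x.1 := by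
  refine ⟨fun h x hx => ?_, fun h p hp => ?_⟩
  · simpa only [ext_of_mem b x.2] using h x.1 (mem_subtype.1 hx)
  · simpa only [ext_of_mem b (hP hp)] using h ⟨p, hP hp⟩ (mem_subtype.2 hp)

open scoped Classical in
theorem sum_weight_bottomPattern {n j : ℕ} (hjn : j ≤ n) (ρ : ℝ) :
    ∑ b ∈ univ.filter (fun b : TriBlock (n + 1) => BottomPattern n j (ext b)),
        ρ ^ numOnes b * (1 - ρ) ^ numZeros b =
      (if j = 0 then 1 else 1 - ρ) * ρ ^ (2 * (n - j) + 1) := by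
  have hsub := patternCells_subset_Tri hjn
  have hw : ∑ v, ![1 - ρ, ρ] v = 1 := by simp [Fin.sum_univ_two]
  calc _ = ∑ b ∈ univ.filter fun b : {p // p ∈ Tri (n + 1)} → Fin 2 =>
          ∀ x ∈ (patternCells n j).subtype (· ∈ Tri (n + 1)), b x = pattern j x.1,
          ∏ x, ![1 - ρ, ρ] (b x) := by
        refine sum_equiv (Equiv.refl _) (fun b => ?_) fun b _ => weight_eq_prod ρ b
        simp only [mem_filter, mem_univ, true_and, bottomPattern_iff_forall_patternCells,
          forall_mem_ext_iff b hsub]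
        rfl
    _ = ∏ p ∈ patternCells n j, ![1 - ρ, ρ] (pattern j p) := by
        rw [sum_prod_eq_prod_of_forall_mem_eq _ _ _ hw]
        exact prod_subtype_of_mem (p := (· ∈ Tri (n + 1))) (fun p => ![1 - ρ, ρ] (pattern j p)) hsub
    _ = _ := prod_patternCells _ hjn

open scoped Classical in
theorem preimages_g138 (n : ℕ) :
    preimages g138 n = (range (n + 1)).biUnion fun j =>
      univ.filter fun b : TriBlock (n + 1) => BottomPattern n j (ext b) := by
  ext b
  simp only [preimages, mem_filter, mem_univ, true_and, mem_biUnion, mem_range, Nat.lt_succ_iff,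
    evolveN_eq_oneBlock_iff, iterate_step_g138_eq_one_iff]

open scoped Classical in
theorem Pn_g138_eq_sum (n : ℕ) (ρ : ℝ) :
    Pn g138 n ρ = ∑ j ∈ range (n + 1), (if j = 0 then 1 else 1 - ρ) * ρ ^ (2 * (n - j) + 1) := by
  have hdisj : (range (n + 1) : Set ℕ).PairwiseDisjoint fun j =>
      univ.filter fun b : TriBlock (n + 1) => BottomPattern n j (ext b) := by
    intro j hj j' hj' hne
    simp only [coe_range, Set.mem_Iio, Nat.lt_succ_iff] at hj hj'
    exact disjoint_filter.2 fun b _ h h' => hne (h.unique hj hj' h')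
  rw [Pn, preimages_g138, sum_biUnion hdisj]
  exact sum_congr rfl fun j hj => sum_weight_bottomPattern (by simpa [Nat.lt_succ_iff] using hj) ρ

theorem mul_pow_add_sum_pow_mul {R : Type*} [CommRing R] (ρ : R) (n : ℕ) :
    (ρ + 1) * (ρ ^ (2 * n + 1) + ∑ i ∈ range n, ρ ^ (2 * i + 1) * (1 - ρ)) =
      ρ ^ (2 * n + 2) + ρ := by
  induction n with
  | zero => ring
  | succ n ih =>
    rw [sum_range_succ]
    linear_combination ih

theorem Pn_g138_eq (n : ℕ) (ρ : ℝ) :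
    Pn g138 n ρ = ρ ^ (2 * n + 1) + ∑ i ∈ range n, ρ ^ (2 * i + 1) * (1 - ρ) := by
  rw [Pn_g138_eq_sum, sum_range_succ', add_comm, ← sum_range_reflect]
  simp only [if_pos, one_mul, Nat.sub_zero, Nat.succ_ne_zero, if_false]
  refine congrArg _ (sum_congr rfl fun i hi => ?_)
  rw [mul_comm, show n - (n - 1 - i + 1) = i by rw [mem_range] at hi; omega]

theorem stmt11_general (n : ℕ) (ρ : ℝ) (hρ : ρ ∈ Set.Icc (0 : ℝ) 1) :
    Pn g138 n ρ = (ρ ^ (2 * n + 2) + ρ) / (ρ + 1) := by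
  rw [eq_div_iff (by linarith [hρ.1]), mul_comm, Pn_g138_eq, mul_pow_add_sum_pow_mul]

/-- the response curve of Rule 138 is
`Pₙ(1) = (ρ^(2n+2) + ρ)/(ρ + 1)` for every `n ≥ 1` and `ρ ∈ [0,1]`. -/
theorem stmt11 (n : ℕ) (hn : 1 ≤ n) (ρ : ℝ) (hρ : ρ ∈ Set.Icc (0 : ℝ) 1) :
    Pn g138 n ρ = (ρ ^ (2 * n + 2) + ρ) / (ρ + 1) :=
  stmt11_general n ρ hρ
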